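/- (Theorem) The thermal global quantum discord satisfies D_th(A₁:⋯:Aₙ) ≥ Σ_{i=1}^n min_{Φ_{A₁⋯A_{i−1}}} D_th(Φ_{A₁⋯A_{i−1}}(ρ)|A_i), where D_th(A₁:⋯:Aₙ) = min_Φ [S(Φ_{A₁⋯Aₙ}(ρ)) − S(ρ)] and each D_th(σ|A_i) is the asymmetric thermal discord minimized over local measurements on A_i, with the i-th term also minimized over the preceding non-selective local measurements on A₁,…,A_{i−1}. -/

import Mathlib

open Matrix BigOperators

/-- Von Neumann entropy in base 2, via eigenvalues of a Hermitian matrix. -/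
noncomputable def Sent {d : Type*} [Fintype d] [DecidableEq d] (ρ : Matrix d d ℂ) : ℝ :=
  if h : ρ.IsHermitian then ∑ i, Real.negMulLog (h.eigenvalues i) / Real.log 2 else 0

/-- Rank-one projector |v⟩⟨v| (for a unit vector v). -/
def proj {d : Type*} (v : d → ℂ) : Matrix d d ℂ := Matrix.vecMulVec v (star v)

/-- `e` is an orthonormal basis (a complete family of rank-one orthogonal projectors). -/
def ONB {d : Type*} [Fintype d] [DecidableEq d] (e : d → d → ℂ) : Prop :=
  ∀ k l, star (e k) ⬝ᵥ e l = if k = l then 1 else 0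

section Multi
variable {n : ℕ} {m : Fin n → Type*} [∀ i, Fintype (m i)] [∀ i, DecidableEq (m i)]

/-- The operator `I ⊗ ⋯ ⊗ A ⊗ ⋯ ⊗ I` acting as `A` on subsystem `i`. -/
def embedAt (i : Fin n) (A : Matrix (m i) (m i) ℂ) :
    Matrix (∀ j, m j) (∀ j, m j) ℂ :=
  Matrix.of fun x y =>
    A (x i) (y i) * ∏ j ∈ Finset.univ.erase i, (if x j = y j then (1 : ℂ) else 0)

/-- Tensor product of local operators. -/
def prodMat (M : ∀ i, Matrix (m i) (m i) ℂ) : Matrix (∀ i, m i) (∀ i, m i) ℂ :=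
  Matrix.of fun x y => ∏ i, M i (x i) (y i)

/-- Marginal (reduced density operator) on subsystem `i`. -/
noncomputable def marginal (ρ : Matrix (∀ j, m j) (∀ j, m j) ℂ) (i : Fin n) :
    Matrix (m i) (m i) ℂ :=
  Matrix.of fun a b => ∑ f : ∀ j, m j, if f i = a then ρ f (Function.update f i b) else 0

/-- Non-selective rank-one projective measurement on subsystem `i` in the basis `e`. -/
noncomputable def pinchAt (i : Fin n) (e : m i → m i → ℂ)
    (ρ : Matrix (∀ j, m j) (∀ j, m j) ℂ) : Matrix (∀ j, m j) (∀ j, m j) ℂ :=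
  ∑ k : m i, embedAt i (proj (e k)) * ρ * embedAt i (proj (e k))

/-- Non-selective local measurements on subsystems `A₁,…,A_k` (in the bases `e`). -/
noncomputable def pinchUpTo (e : ∀ i, m i → m i → ℂ) :
    ℕ → Matrix (∀ j, m j) (∀ j, m j) ℂ → Matrix (∀ j, m j) (∀ j, m j) ℂ
  | 0 => id
  | (k + 1) => fun ρ =>
      if h : k < n then pinchAt ⟨k, h⟩ (e ⟨k, h⟩) (pinchUpTo e k ρ)
      else pinchUpTo e k ρ

/-- Multipartite mutual information `I(σ) = Σ_k S(σ_{A_k}) − S(σ)`. -/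
noncomputable def Imut (σ : Matrix (∀ j, m j) (∀ j, m j) ℂ) : ℝ :=
  (∑ i, Sent (marginal σ i)) - Sent σ

/-- Shannon entropy (base 2) of the outcome distribution of the measurement of
subsystem `i` in basis `e`, in state `σ`. -/
noncomputable def Hmeas (i : Fin n) (e : m i → m i → ℂ)
    (σ : Matrix (∀ j, m j) (∀ j, m j) ℂ) : ℝ :=
  ∑ k : m i, Real.negMulLog ((embedAt i (proj (e k)) * σ).trace.re) / Real.log 2

/-- Fixed-measurement asymmetric thermal discord
`D_Φ(σ|A_i) = I(σ) − I(Φ_{A_i}(σ)) + H({p_{a_i}}) − S(σ_{A_i})`. -/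
noncomputable def DPhiAt (i : Fin n) (e : m i → m i → ℂ)
    (σ : Matrix (∀ j, m j) (∀ j, m j) ℂ) : ℝ :=
  Imut σ - Imut (pinchAt i e σ) + Hmeas i e σ - Sent (marginal σ i)

/-- Asymmetric thermal discord `D_th(σ|A_i)`, minimized over measurements on `A_i`. -/
noncomputable def DthAt (i : Fin n) (σ : Matrix (∀ j, m j) (∀ j, m j) ℂ) : ℝ :=
  sInf {x : ℝ | ∃ e : m i → m i → ℂ, ONB e ∧ x = DPhiAt i e σ}

/-- Thermal global quantum discord. -/
noncomputable def GQD (ρ : Matrix (∀ j, m j) (∀ j, m j) ℂ) : ℝ :=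
  sInf {x : ℝ | ∃ e : ∀ i, m i → m i → ℂ,
    (∀ i, ONB (e i)) ∧ x = Sent (pinchUpTo e n ρ) - Sent ρ}

end Multi

/-!
Fix local bases and measure `A₁, …, Aₙ` one after the other. The entropy increase
`S(Φ_{A₁⋯Aₙ}(ρ)) − S(ρ)` telescopes into the increases caused by measuring `A_i` on the
already measured state `Φ_{A₁⋯A_{i−1}}(ρ)`. Each of these is `D_Φ(Φ_{A₁⋯A_{i−1}}(ρ)|A_i)`: a local
measurement of `A_i` leaves the other marginals unchanged and turns the marginal on `A_i` into the
diagonal matrix of outcome probabilities, whose entropy is `H({p_{a_i}})`. Each term is at least its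
infimum over all bases, and it remains to take the infimum over the bases on the right.
-/

open scoped ComplexOrder

section SingleSystem

variable {d : Type*} [Fintype d]

lemma ONB.standard [DecidableEq d] : ONB (fun k : d => (Pi.single k 1 : d → ℂ)) := by
  intro k l
  by_cases h : k = l
  · subst h; simp
  · simp [h]

omit [Fintype d] in
lemma conjTranspose_proj (v : d → ℂ) : (proj v)ᴴ = proj v := by
  simp [proj, conjTranspose_vecMulVec]

lemma proj_mul_proj_of_unit {v : d → ℂ} (hv : star v ⬝ᵥ v = 1) : proj v * proj v = proj v := by
  rw [proj, vecMulVec_mul_vecMulVec, hv, one_smul]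

lemma trace_proj_mul (v : d → ℂ) (M : Matrix d d ℂ) :
    (proj v * M).trace = star v ⬝ᵥ M *ᵥ v := by
  rw [proj, vecMulVec_mul, trace_vecMulVec, dotProduct_comm, dotProduct_mulVec]

lemma proj_mul_mul_proj (v : d → ℂ) (M : Matrix d d ℂ) :
    proj v * M * proj v = (star v ⬝ᵥ M *ᵥ v) • proj v := by
  rw [proj, vecMulVec_mul, vecMulVec_mul_vecMulVec, vecMulVec_smul, dotProduct_mulVec]

def basisMatrix (e : d → d → ℂ) : Matrix d d ℂ := Matrix.of fun a k => e k a

lemma basisMatrix_mul_diagonal_mul_conjTranspose [DecidableEq d] (e : d → d → ℂ) (q : d → ℂ) :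
    basisMatrix e * diagonal q * (basisMatrix e)ᴴ = ∑ k, q k • proj (e k) := by
  ext a b
  simp [basisMatrix, proj, Matrix.mul_apply, Matrix.sum_apply, vecMulVec_apply, diagonal_apply]
  exact Finset.sum_congr rfl fun _ _ => by ring

lemma ONB.conjTranspose_mul_basisMatrix [DecidableEq d] {e : d → d → ℂ} (he : ONB e) :
    (basisMatrix e)ᴴ * basisMatrix e = 1 := by
  ext k l
  simpa [basisMatrix, Matrix.mul_apply, dotProduct, Matrix.one_apply] using he k l

lemma ONB.sum_proj [DecidableEq d] {e : d → d → ℂ} (he : ONB e) : ∑ k, proj (e k) = 1 := by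
  have h := basisMatrix_mul_diagonal_mul_conjTranspose e fun _ => 1
  rw [diagonal_one, Matrix.mul_one, mul_eq_one_comm.mp he.conjTranspose_mul_basisMatrix] at h
  simpa using h.symm

end SingleSystem

section Entropy

open Polynomial

variable {d : Type*} [Fintype d] [DecidableEq d]

lemma Matrix.IsHermitian.sum_comp_eigenvalues {A : Matrix d d ℂ} (hA : A.IsHermitian)
    (g : ℝ → ℝ) : ∑ i, g (hA.eigenvalues i) = (A.charpoly.roots.map (g ∘ Complex.re)).sum := by
  rw [hA.roots_charpoly_eq_eigenvalues, Multiset.map_map]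
  exact congrArg Multiset.sum (Multiset.map_congr rfl fun i _ => by simp)

lemma Sent_mul_diagonal_mul_conjTranspose {U : Matrix d d ℂ} (hU : Uᴴ * U = 1) (q : d → ℝ) :
    Sent (U * diagonal (fun k => (q k : ℂ)) * Uᴴ) = ∑ k, Real.negMulLog (q k) / Real.log 2 := by
  have hD : (diagonal fun k => (q k : ℂ)).IsHermitian := by
    simp [IsHermitian, diagonal_conjTranspose, Pi.star_def]
  have hA := isHermitian_mul_mul_conjTranspose U hD
  have hroots : (U * diagonal (fun k => (q k : ℂ)) * Uᴴ).charpoly.roots =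
      Finset.univ.val.map fun k => (q k : ℂ) := by
    rw [charpoly_mul_comm, ← Matrix.mul_assoc, hU, Matrix.one_mul, charpoly_diagonal,
      roots_prod _ _ (Finset.prod_ne_zero_iff.mpr fun _ _ => X_sub_C_ne_zero _)]
    simp
  rw [Sent, dif_pos hA, hA.sum_comp_eigenvalues (fun t => Real.negMulLog t / Real.log 2), hroots,
    Multiset.map_map]
  exact congrArg Multiset.sum (Multiset.map_congr rfl fun k _ => by simp)

def IsDensityMatrix (A : Matrix d d ℂ) : Prop := A.PosSemidef ∧ A.trace = 1

lemma IsDensityMatrix.eigenvalues_le_one {A : Matrix d d ℂ} (hA : IsDensityMatrix A) (i : d) :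
    hA.1.1.eigenvalues i ≤ 1 := by
  obtain ⟨hA, htr⟩ := hA
  have hsum : 1 = ∑ j, hA.1.eigenvalues j := by
    simpa [htr] using congrArg Complex.re hA.1.trace_eq_sum_eigenvalues
  exact hsum ▸ Finset.single_le_sum (fun j _ => hA.eigenvalues_nonneg j) (Finset.mem_univ i)

lemma Sent_nonneg {A : Matrix d d ℂ} (hA : IsDensityMatrix A) : 0 ≤ Sent A := by
  rw [Sent, dif_pos hA.1.1]
  exact Finset.sum_nonneg fun i _ => div_nonneg
    (Real.negMulLog_nonneg (hA.1.eigenvalues_nonneg i) (hA.eigenvalues_le_one i))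
    (Real.log_nonneg one_le_two)

lemma Sent_le_card_div_log_two {A : Matrix d d ℂ} (hA : A.PosSemidef) :
    Sent A ≤ Fintype.card d / Real.log 2 := by
  rw [Sent, dif_pos hA.1, ← Finset.sum_div, ← Finset.card_univ, Finset.card_eq_sum_ones,
    Nat.cast_sum, Nat.cast_one]
  gcongr with i
  linarith [Real.negMulLog_le_one_sub_self (hA.eigenvalues_nonneg i), hA.eigenvalues_nonneg i]

end Entropy

section ProductBasis

variable {n : ℕ} {m : Fin n → Type*}

def joinAt (i : Fin n) (c : m i) (u : ∀ j : {j // j ≠ i}, m j) : ∀ j, m j :=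
  (Equiv.piSplitAt i m).symm (c, u)

@[simp] lemma joinAt_apply_self (i : Fin n) (c : m i) (u : ∀ j : {j // j ≠ i}, m j) :
    joinAt i c u i = c := by
  simp [joinAt, Equiv.piSplitAt_symm_apply]

lemma restrict_joinAt (i : Fin n) (c : m i) (u : ∀ j : {j // j ≠ i}, m j) :
    (fun j : {j // j ≠ i} => joinAt i c u j) = u := by
  funext j
  simp [joinAt, Equiv.piSplitAt_symm_apply, j.2]

@[simp] lemma update_joinAt (i : Fin n) (c c' : m i) (u : ∀ j : {j // j ≠ i}, m j) :
    Function.update (joinAt i c u) i c' = joinAt i c' u := by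
  funext j
  rcases eq_or_ne j i with rfl | h
  · simp
  · simp [joinAt, Equiv.piSplitAt_symm_apply, h]

lemma joinAt_restrict (i : Fin n) (c : m i) (f : ∀ j, m j) :
    joinAt i c (fun j => f j) = Function.update f i c := by
  funext j
  rcases eq_or_ne j i with rfl | h
  · simp
  · simp [joinAt, Equiv.piSplitAt_symm_apply, h]

lemma restrict_update (i : Fin n) (x : ∀ j, m j) (c : m i) :
    (fun j : {j // j ≠ i} => Function.update x i c j) = fun j : {j // j ≠ i} => x j :=
  funext fun j => Function.update_of_ne j.2 _ _

lemma eq_iff_apply_eq_and_restrict_eq (i : Fin n) {x y : ∀ j, m j} :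
    x = y ↔ x i = y i ∧ (fun j : {j // j ≠ i} => x j) = (fun j : {j // j ≠ i} => y j) := by
  rw [← (Equiv.piSplitAt i m).injective.eq_iff, Equiv.piSplitAt_apply, Equiv.piSplitAt_apply,
    Prod.ext_iff]

lemma sum_eq_sum_joinAt [∀ i, Fintype (m i)] {M : Type*} [AddCommMonoid M] (i : Fin n)
    (g : (∀ j, m j) → M) :
    ∑ f, g f = ∑ c : m i, ∑ u, g (joinAt i c u) := by
  rw [← (Equiv.piSplitAt i m).symm.sum_comp, Fintype.sum_prod_type]
  rfl

lemma sum_sum_update_swap [∀ i, Fintype (m i)] {M : Type*} [AddCommMonoid M] (i : Fin n)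
    (g : (∀ j, m j) → m i → M) :
    ∑ f, ∑ c, g f c = ∑ f, ∑ c, g (Function.update f i c) (f i) := by
  simp only [sum_eq_sum_joinAt i, joinAt_apply_self, update_joinAt]
  exact Finset.sum_comm.trans ((Finset.sum_congr rfl fun _ _ => Finset.sum_comm).trans
    Finset.sum_comm.symm)

end ProductBasis

section Embedding

variable {n : ℕ} {m : Fin n → Type*} [∀ i, DecidableEq (m i)]

lemma embedAt_apply (i : Fin n) (A : Matrix (m i) (m i) ℂ) (x y : ∀ j, m j) :
    embedAt i A x y =
      if (fun j : {j // j ≠ i} => x j) = (fun j : {j // j ≠ i} => y j) then A (x i) (y i)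
      else 0 := by
  rw [embedAt, of_apply, Finset.prod_ite_zero, Finset.prod_const_one]
  simp [funext_iff, Subtype.forall]

lemma embedAt_sum {ι : Type*} (i : Fin n) (s : Finset ι) (A : ι → Matrix (m i) (m i) ℂ) :
    embedAt i (∑ k ∈ s, A k) = ∑ k ∈ s, embedAt i (A k) := by
  ext x y
  simp [embedAt_apply, Matrix.sum_apply]

lemma conjTranspose_embedAt (i : Fin n) (A : Matrix (m i) (m i) ℂ) :
    (embedAt i A)ᴴ = embedAt i Aᴴ := by
  ext x y
  simp [embedAt_apply, apply_ite star, eq_comm]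

lemma embedAt_one (i : Fin n) : embedAt i (1 : Matrix (m i) (m i) ℂ) = 1 := by
  ext x y
  simp only [embedAt_apply, one_apply, eq_iff_apply_eq_and_restrict_eq i (x := x)]
  split_ifs <;> simp_all

variable [∀ i, Fintype (m i)]

lemma embedAt_mul_apply (i : Fin n) (A : Matrix (m i) (m i) ℂ)
    (σ : Matrix (∀ j, m j) (∀ j, m j) ℂ) (f g : ∀ j, m j) :
    (embedAt i A * σ) f g = ∑ c, A (f i) c * σ (Function.update f i c) g := by
  rw [mul_apply, sum_eq_sum_joinAt i]
  simp [embedAt_apply, restrict_joinAt, ite_mul, joinAt_restrict]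

lemma mul_embedAt_apply (i : Fin n) (A : Matrix (m i) (m i) ℂ)
    (σ : Matrix (∀ j, m j) (∀ j, m j) ℂ) (f g : ∀ j, m j) :
    (σ * embedAt i A) f g = ∑ c, σ f (Function.update g i c) * A c (g i) := by
  rw [mul_apply, sum_eq_sum_joinAt i]
  simp [embedAt_apply, restrict_joinAt, mul_ite, joinAt_restrict]

lemma embedAt_mul (i : Fin n) (A B : Matrix (m i) (m i) ℂ) :
    embedAt i A * embedAt i B = embedAt i (A * B) := by
  ext x y
  rw [embedAt_mul_apply, embedAt_apply]
  split_ifs with h <;> simp [embedAt_apply, restrict_update, h, mul_apply]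

end Embedding

section Marginal

variable {n : ℕ} {m : Fin n → Type*} [∀ i, Fintype (m i)] [∀ i, DecidableEq (m i)]

lemma marginal_apply_eq_sum_joinAt (σ : Matrix (∀ j, m j) (∀ j, m j) ℂ) (i : Fin n) (a b : m i) :
    marginal σ i a b = ∑ u, σ (joinAt i a u) (joinAt i b u) := by
  rw [marginal, of_apply, sum_eq_sum_joinAt i]
  simp

lemma marginal_sum {ι : Type*} (s : Finset ι) (σ : ι → Matrix (∀ j, m j) (∀ j, m j) ℂ)
    (i : Fin n) : marginal (∑ k ∈ s, σ k) i = ∑ k ∈ s, marginal (σ k) i := by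
  ext a b
  simp only [marginal_apply_eq_sum_joinAt, Matrix.sum_apply]
  exact Finset.sum_comm

lemma trace_marginal (σ : Matrix (∀ j, m j) (∀ j, m j) ℂ) (i : Fin n) :
    (marginal σ i).trace = σ.trace := by
  simp only [trace, diag, marginal_apply_eq_sum_joinAt]
  exact (sum_eq_sum_joinAt i fun f => σ f f).symm

lemma conjTranspose_marginal (σ : Matrix (∀ j, m j) (∀ j, m j) ℂ) (i : Fin n) :
    (marginal σ i)ᴴ = marginal σᴴ i := by
  ext a b
  simp [marginal_apply_eq_sum_joinAt]

lemma Matrix.IsHermitian.marginal {σ : Matrix (∀ j, m j) (∀ j, m j) ℂ} (hσ : σ.IsHermitian)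
    (i : Fin n) : (_root_.marginal σ i).IsHermitian := by
  rw [IsHermitian, conjTranspose_marginal, hσ.eq]

lemma marginal_embedAt_mul_mul_embedAt (i : Fin n) (A B : Matrix (m i) (m i) ℂ)
    (σ : Matrix (∀ j, m j) (∀ j, m j) ℂ) :
    marginal (embedAt i A * σ * embedAt i B) i = A * marginal σ i * B := by
  ext a b
  simp only [marginal_apply_eq_sum_joinAt, Matrix.mul_assoc, embedAt_mul_apply, mul_embedAt_apply,
    joinAt_apply_self, update_joinAt]
  simp only [mul_apply, marginal_apply_eq_sum_joinAt, Finset.mul_sum, Finset.sum_mul]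
  exact Finset.sum_comm.trans (Finset.sum_congr rfl fun _ _ => Finset.sum_comm)

lemma trace_embedAt_mul (i : Fin n) (A : Matrix (m i) (m i) ℂ)
    (σ : Matrix (∀ j, m j) (∀ j, m j) ℂ) :
    (embedAt i A * σ).trace = (A * marginal σ i).trace := by
  rw [← trace_marginal, ← Matrix.mul_one (embedAt i A * σ), ← embedAt_one,
    marginal_embedAt_mul_mul_embedAt, Matrix.mul_one]

lemma marginal_embedAt_mul_comm {i j : Fin n} (hij : j ≠ i) (A : Matrix (m i) (m i) ℂ)
    (σ : Matrix (∀ j, m j) (∀ j, m j) ℂ) :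
    marginal (embedAt i A * σ) j = marginal (σ * embedAt i A) j := by
  ext a b
  simp only [marginal, of_apply, embedAt_mul_apply, mul_embedAt_apply,
    Function.update_of_ne hij.symm, Finset.ite_sum_zero]
  rw [sum_sum_update_swap i]
  refine Finset.sum_congr rfl fun f _ => Finset.sum_congr rfl fun c _ => ?_
  rw [Function.update_of_ne hij, Function.update_self, Function.update_idem,
    Function.update_eq_self, Function.update_comm hij.symm]
  split_ifs <;> ring

end Marginal

section Pinching

variable {n : ℕ} {m : Fin n → Type*} [∀ i, Fintype (m i)] [∀ i, DecidableEq (m i)]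

lemma Matrix.PosSemidef.pinchAt {σ : Matrix (∀ j, m j) (∀ j, m j) ℂ} (hσ : σ.PosSemidef)
    (i : Fin n) (e : m i → m i → ℂ) : (_root_.pinchAt i e σ).PosSemidef :=
  posSemidef_sum _ fun k _ => by
    simpa [conjTranspose_embedAt, conjTranspose_proj] using
      hσ.conjTranspose_mul_mul_same (embedAt i (proj (e k)))

lemma Matrix.IsHermitian.pinchAt {σ : Matrix (∀ j, m j) (∀ j, m j) ℂ} (hσ : σ.IsHermitian)
    (i : Fin n) (e : m i → m i → ℂ) : (_root_.pinchAt i e σ).IsHermitian := by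
  simp [IsHermitian, _root_.pinchAt, conjTranspose_sum, conjTranspose_embedAt, conjTranspose_proj,
    hσ.eq, Matrix.mul_assoc]

lemma ONB.embedAt_proj_mul_self {i : Fin n} {e : m i → m i → ℂ} (he : ONB e) (k : m i) :
    embedAt i (proj (e k)) * embedAt i (proj (e k)) = embedAt i (proj (e k)) := by
  rw [embedAt_mul, proj_mul_proj_of_unit (by simpa using he k k)]

lemma ONB.sum_embedAt_proj {i : Fin n} {e : m i → m i → ℂ} (he : ONB e) :
    ∑ k, embedAt i (proj (e k)) = 1 := by
  rw [← embedAt_sum, he.sum_proj, embedAt_one]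

lemma trace_pinchAt {i : Fin n} {e : m i → m i → ℂ} (he : ONB e)
    (σ : Matrix (∀ j, m j) (∀ j, m j) ℂ) : (pinchAt i e σ).trace = σ.trace := by
  simp only [pinchAt, trace_sum]
  simp_rw [trace_mul_cycle _ σ, he.embedAt_proj_mul_self, ← trace_sum, ← Finset.sum_mul,
    he.sum_embedAt_proj, Matrix.one_mul]

lemma marginal_pinchAt_of_ne {i j : Fin n} (hij : j ≠ i) {e : m i → m i → ℂ} (he : ONB e)
    (σ : Matrix (∀ j, m j) (∀ j, m j) ℂ) : marginal (pinchAt i e σ) j = marginal σ j := by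
  simp_rw [pinchAt, marginal_sum, Matrix.mul_assoc, marginal_embedAt_mul_comm hij,
    Matrix.mul_assoc, he.embedAt_proj_mul_self, ← marginal_sum, ← Finset.mul_sum,
    he.sum_embedAt_proj, Matrix.mul_one]

lemma marginal_pinchAt_self (i : Fin n) (e : m i → m i → ℂ) (σ : Matrix (∀ j, m j) (∀ j, m j) ℂ) :
    marginal (pinchAt i e σ) i =
      basisMatrix e * diagonal (fun k => star (e k) ⬝ᵥ marginal σ i *ᵥ e k) * (basisMatrix e)ᴴ := by
  simp only [pinchAt, marginal_sum, marginal_embedAt_mul_mul_embedAt, proj_mul_mul_proj,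
    basisMatrix_mul_diagonal_mul_conjTranspose]

lemma IsDensityMatrix.pinchAt {σ : Matrix (∀ j, m j) (∀ j, m j) ℂ} (hσ : IsDensityMatrix σ)
    {i : Fin n} {e : m i → m i → ℂ} (he : ONB e) : IsDensityMatrix (pinchAt i e σ) :=
  ⟨hσ.1.pinchAt i e, (trace_pinchAt he σ).trans hσ.2⟩

end Pinching

section Discord

variable {n : ℕ} {m : Fin n → Type*} [∀ i, Fintype (m i)] [∀ i, DecidableEq (m i)]

lemma Sent_marginal_pinchAt_self {i : Fin n} {e : m i → m i → ℂ} (he : ONB e)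
    {σ : Matrix (∀ j, m j) (∀ j, m j) ℂ} (hσ : σ.IsHermitian) :
    Sent (marginal (pinchAt i e σ) i) = Hmeas i e σ := by
  have hreal : ∀ k, star (e k) ⬝ᵥ marginal σ i *ᵥ e k =
      ((star (e k) ⬝ᵥ marginal σ i *ᵥ e k).re : ℂ) := fun k =>
    Complex.ext rfl (by simpa using (hσ.marginal i).im_star_dotProduct_mulVec_self (e k))
  rw [marginal_pinchAt_self, funext hreal, Sent_mul_diagonal_mul_conjTranspose he.conjTranspose_mul_basisMatrix]
  simp only [Hmeas, trace_embedAt_mul, trace_proj_mul]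

lemma DPhiAt_eq_Sent_pinchAt_sub {i : Fin n} {e : m i → m i → ℂ} (he : ONB e)
    {σ : Matrix (∀ j, m j) (∀ j, m j) ℂ} (hσ : σ.IsHermitian) :
    DPhiAt i e σ = Sent (pinchAt i e σ) - Sent σ := by
  have hother : ∑ j, Sent (marginal (pinchAt i e σ) j) - ∑ j, Sent (marginal σ j) =
      Sent (marginal (pinchAt i e σ) i) - Sent (marginal σ i) := by
    rw [← Finset.sum_sub_distrib]
    exact Finset.sum_eq_single i (fun j _ hji => by rw [marginal_pinchAt_of_ne hji he, sub_self])
      (by simp)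
  rw [DPhiAt, Imut, Imut, ← Sent_marginal_pinchAt_self he hσ]
  linarith

/-- A crude bound, needed only because `sInf` of a set of reals that is unbounded below is `0`. -/
lemma neg_le_DPhiAt {i : Fin n} {e : m i → m i → ℂ} (he : ONB e)
    {σ : Matrix (∀ j, m j) (∀ j, m j) ℂ} (hσ : IsDensityMatrix σ) :
    -(Fintype.card (∀ j, m j) / Real.log 2) ≤ DPhiAt i e σ := by
  rw [DPhiAt_eq_Sent_pinchAt_sub he hσ.1.1]
  linarith [Sent_nonneg (hσ.pinchAt he), Sent_le_card_div_log_two hσ.1]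

lemma DthAt_le_DPhiAt {i : Fin n} {e : m i → m i → ℂ} (he : ONB e)
    {σ : Matrix (∀ j, m j) (∀ j, m j) ℂ} (hσ : IsDensityMatrix σ) :
    DthAt i σ ≤ DPhiAt i e σ :=
  csInf_le ⟨_, by rintro _ ⟨e', he', rfl⟩; exact neg_le_DPhiAt he' hσ⟩ ⟨e, he, rfl⟩

lemma neg_le_DthAt (i : Fin n) {σ : Matrix (∀ j, m j) (∀ j, m j) ℂ} (hσ : IsDensityMatrix σ) :
    -(Fintype.card (∀ j, m j) / Real.log 2) ≤ DthAt i σ :=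
  le_csInf ⟨_, _, ONB.standard, rfl⟩ fun _ ⟨_, he', hx⟩ => hx ▸ neg_le_DPhiAt he' hσ

end Discord

section Chain

variable {n : ℕ} {m : Fin n → Type*} [∀ i, Fintype (m i)] [∀ i, DecidableEq (m i)]

lemma pinchUpTo_succ (e : ∀ i, m i → m i → ℂ) (ρ : Matrix (∀ j, m j) (∀ j, m j) ℂ) (i : Fin n) :
    pinchUpTo e (i + 1) ρ = pinchAt i (e i) (pinchUpTo e i ρ) := by
  simp [pinchUpTo, i.isLt]

lemma pinchUpTo_induction {P : Matrix (∀ j, m j) (∀ j, m j) ℂ → Prop} (e : ∀ i, m i → m i → ℂ)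
    (hP : ∀ i σ, P σ → P (pinchAt i (e i) σ)) {ρ : Matrix (∀ j, m j) (∀ j, m j) ℂ} (hρ : P ρ)
    (k : ℕ) : P (pinchUpTo e k ρ) := by
  induction k with
  | zero => exact hρ
  | succ k ih =>
    rw [pinchUpTo]
    split_ifs
    exacts [hP _ _ ih, ih]

lemma IsDensityMatrix.pinchUpTo {ρ : Matrix (∀ j, m j) (∀ j, m j) ℂ} (hρ : IsDensityMatrix ρ)
    {e : ∀ i, m i → m i → ℂ} (he : ∀ i, ONB (e i)) (k : ℕ) : IsDensityMatrix (pinchUpTo e k ρ) :=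
  pinchUpTo_induction e (fun i _ hσ => hσ.pinchAt (he i)) hρ k

/-- The chain decomposition `D_Φ = Σᵢ D_Φ(Φ_{A₁⋯A_{i−1}}(ρ)|A_i)`. -/
lemma Sent_pinchUpTo_sub_eq_sum_DPhiAt {e : ∀ i, m i → m i → ℂ} (he : ∀ i, ONB (e i))
    {ρ : Matrix (∀ j, m j) (∀ j, m j) ℂ} (hρ : ρ.IsHermitian) :
    Sent (pinchUpTo e n ρ) - Sent ρ = ∑ i : Fin n, DPhiAt i (e i) (pinchUpTo e i ρ) := by
  have hherm := pinchUpTo_induction e (fun i σ hσ => hσ.pinchAt i (e i)) hρ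
  simp only [DPhiAt_eq_Sent_pinchAt_sub (he _) (hherm _), ← pinchUpTo_succ]
  rw [Fin.sum_univ_eq_sum_range (fun k => Sent (pinchUpTo e (k + 1) ρ) - Sent (pinchUpTo e k ρ)),
    Finset.sum_range_sub (fun k => Sent (pinchUpTo e k ρ))]
  rfl

end Chain

open scoped ComplexOrder in
/-- Theorem: the thermal global quantum discord bounds the chained sum of
asymmetric thermal discords:
`D_th(A₁:⋯:Aₙ) ≥ Σᵢ min_{Φ_{A₁⋯A_{i−1}}} D_th(Φ_{A₁⋯A_{i−1}}(ρ)|A_i)`. -/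
theorem GQD_ge_sum_min_Dth {n : ℕ} {m : Fin n → Type*}
    [∀ i, Fintype (m i)] [∀ i, DecidableEq (m i)]
    (ρ : Matrix (∀ j, m j) (∀ j, m j) ℂ) (hρ : ρ.PosSemidef) (htr : ρ.trace = 1) :
    (∑ i : Fin n, sInf {x : ℝ | ∃ e : ∀ i, m i → m i → ℂ,
        (∀ i, ONB (e i)) ∧ x = DthAt i (pinchUpTo e i.val ρ)}) ≤ GQD ρ := by
  have hstate : IsDensityMatrix ρ := ⟨hρ, htr⟩
  refine le_csInf ⟨_, fun _ => _, fun _ => ONB.standard, rfl⟩ ?_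
  rintro _ ⟨e, he, rfl⟩
  rw [Sent_pinchUpTo_sub_eq_sum_DPhiAt he hρ.1]
  refine Finset.sum_le_sum fun i _ => ?_
  calc _ ≤ DthAt i (pinchUpTo e i ρ) := by
        refine csInf_le ⟨-(Fintype.card (∀ j, m j) / Real.log 2), ?_⟩ ⟨e, he, rfl⟩
        rintro _ ⟨e', he', rfl⟩
        exact neg_le_DthAt i (hstate.pinchUpTo he' i)
    _ ≤ DPhiAt i (e i) (pinchUpTo e i ρ) := DthAt_le_DPhiAt (he i) (hstate.pinchUpTo he i)
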